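/- arXiv:2311.02308 — 5 statements merged into one kernel-verified Lean document; each statement's English description precedes it below -/
import Mathlib

section
/- Let X^w ∼ F^w = F_ind^{w_e} with all marginals F_j continuous and strictly increasing, and let u ⊊ {1,…,d} with complement π = (π_1,…,π_{|π|}). Define W(u_{π_1},…,u_{π_{|π|}}; x_u^w) := E_{V_π}[w_e(x_u^w, F_{π_1}^{-1}(V_{π_1}),…,F_{π_{|π|}}^{-1}(V_{π_{|π|}}))] / E_{F_ind}[w_e(x_u^w, Y_{∼u})] · ∏_{j=1}^{|π|} u_{π_j}, where V_{π_k} ∼ U(0, u_{π_k}) are independent. Then W(·; x_u^w) is a cumulative distribution function on [0,1]^{d−|u|} and the conditional CDF satisfies F^w_{∼u|u}(x_{∼u} | x_u^w) = W(F_{π_1}(x_{π_1}),…,F_{π_{|π|}}(x_{π_{|π|}}); x_u^w). -/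
/-!
By the probability integral transform, the strictly increasing marginal CDF `F_j` pushes the law
with density `ρ_j` forward to the uniform law on `(0, 1]`; hence `T y = (F_j (y_j))_j` pushes the
independent law `∏ ρ_j` forward to the uniform law on the unit box, and `F_j⁻¹ ∘ F_j = id`.
Substituting `v = T y` turns the integral of `w_e(x_u, F⁻¹ v)` over `∏ (0, t_j]` into the integral
of `w_e(x_u, y) ∏ ρ_j(y_j)` over `T⁻¹(∏ (-∞, t_j])`. So `W(·; x_u)` is the CDF of the image under
`T` of the normalized weighted law, and at `t = F(x)` the box `T⁻¹(∏ (-∞, F_j x_j])` is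
`∏ (-∞, x_j]`, which gives the conditional CDF.
-/

open MeasureTheory Set

/-- Recombine coordinates indexed by `u` and by its complement into a full vector. -/
noncomputable def combine {d : ℕ} (u : Finset (Fin d))
    (a : ∀ _ : u, ℝ) (b : ∀ _ : (uᶜ : Finset (Fin d)), ℝ) : Fin d → ℝ :=
  fun i => if h : i ∈ u then a ⟨i, h⟩ else b ⟨i, Finset.mem_compl.mpr h⟩

section WithDensity

variable {α : Type*} [MeasurableSpace α] {μ : Measure α} {f : α → ℝ}

lemma measureReal_withDensity_ofReal (hf_nonneg : 0 ≤ᵐ[μ] f) (hf : Integrable f μ)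
    {s : Set α} (hs : MeasurableSet s) :
    (μ.withDensity fun x => ENNReal.ofReal (f x)).real s = ∫ x in s, f x ∂μ := by
  rw [measureReal_def, withDensity_apply _ hs,
    ← ofReal_integral_eq_lintegral_ofReal hf.restrict (ae_restrict_of_ae hf_nonneg),
    ENNReal.toReal_ofReal (setIntegral_nonneg_of_ae_restrict (ae_restrict_of_ae hf_nonneg))]

lemma isProbabilityMeasure_withDensity_ofReal (hf_nonneg : 0 ≤ᵐ[μ] f)
    (hf : ∫ x, f x ∂μ = 1) :
    IsProbabilityMeasure (μ.withDensity fun x => ENNReal.ofReal (f x)) := by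
  have hf_int : Integrable f μ := Integrable.of_integral_ne_zero (by simp [hf])
  constructor
  rw [withDensity_apply _ MeasurableSet.univ, Measure.restrict_univ,
    ← ofReal_integral_eq_lintegral_ofReal hf_int hf_nonneg, hf, ENNReal.ofReal_one]

lemma setIntegral_withDensity_ofReal [SFinite μ] (hf_nonneg : 0 ≤ᵐ[μ] f) (hf : AEMeasurable f μ)
    (g : α → ℝ) (s : Set α) :
    ∫ x in s, g x ∂μ.withDensity (fun x => ENNReal.ofReal (f x)) = ∫ x in s, g x * f x ∂μ := by
  rw [setIntegral_withDensity_eq_setIntegral_toReal_smul₀' s hf.ennreal_ofReal.restrict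
    (ae_of_all _ fun _ => ENNReal.ofReal_lt_top)]
  refine integral_congr_ae ?_
  filter_upwards [ae_restrict_of_ae hf_nonneg] with x hx
  rw [ENNReal.toReal_ofReal hx, smul_eq_mul, mul_comm]

/-- `μ.withDensity f` rescaled to total mass one; junk (`⊤ • _`) when `∫ f ∂μ = 0`. -/
noncomputable def normalizedWithDensity (μ : Measure α) (f : α → ℝ) : Measure α :=
  (ENNReal.ofReal (∫ x, f x ∂μ))⁻¹ • μ.withDensity fun x => ENNReal.ofReal (f x)

lemma normalizedWithDensity_real_apply (hf_nonneg : 0 ≤ᵐ[μ] f) (hf : Integrable f μ)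
    {s : Set α} (hs : MeasurableSet s) :
    (normalizedWithDensity μ f).real s = (∫ x in s, f x ∂μ) / ∫ x, f x ∂μ := by
  rw [normalizedWithDensity, measureReal_def, Measure.smul_apply, smul_eq_mul,
    ENNReal.toReal_mul, ← measureReal_def, measureReal_withDensity_ofReal hf_nonneg hf hs,
    ENNReal.toReal_inv, ENNReal.toReal_ofReal (integral_nonneg_of_ae hf_nonneg), div_eq_inv_mul]

lemma isProbabilityMeasure_normalizedWithDensity (hf_nonneg : 0 ≤ᵐ[μ] f) (hf : Integrable f μ)
    (hf_pos : 0 < ∫ x, f x ∂μ) : IsProbabilityMeasure (normalizedWithDensity μ f) := by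
  constructor
  rw [normalizedWithDensity, Measure.smul_apply, withDensity_apply _ MeasurableSet.univ,
    Measure.restrict_univ, ← ofReal_integral_eq_lintegral_ofReal hf hf_nonneg, smul_eq_mul]
  exact ENNReal.inv_mul_cancel (ENNReal.ofReal_pos.mpr hf_pos).ne' ENNReal.ofReal_ne_top

end WithDensity

lemma MeasureTheory.Measure.pi_withDensity_ofReal {ι : Type*} [Fintype ι] {E : ι → Type*}
    [∀ i, MeasurableSpace (E i)] {μ : ∀ i, Measure (E i)} [∀ i, SigmaFinite (μ i)]
    {ρ : ∀ i, E i → ℝ} (hρ_nonneg : ∀ i x, 0 ≤ ρ i x) (hρ : ∀ i, Integrable (ρ i) (μ i)) :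
    Measure.pi (fun i => (μ i).withDensity fun x => ENNReal.ofReal (ρ i x))
      = (Measure.pi μ).withDensity fun y => ENNReal.ofReal (∏ i, ρ i (y i)) := by
  have := fun i => isFiniteMeasure_withDensity_ofReal (hρ i).2
  refine Measure.pi_eq fun s hs => ?_
  rw [withDensity_apply _ (.univ_pi hs), Measure.restrict_pi_pi,
    ← ofReal_integral_eq_lintegral_ofReal (Integrable.fintype_prod_dep fun i => (hρ i).restrict)
      (ae_of_all _ fun y => Finset.prod_nonneg fun i _ => hρ_nonneg i (y i)),
    integral_fintype_prod_eq_prod,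
    ENNReal.ofReal_prod_of_nonneg fun i _ =>
      setIntegral_nonneg_of_ae_restrict (ae_of_all _ (hρ_nonneg i))]
  refine Finset.prod_congr rfl fun i _ => ?_
  rw [withDensity_apply _ (hs i),
    ofReal_integral_eq_lintegral_ofReal (hρ i).restrict (ae_of_all _ (hρ_nonneg i))]

section ProbabilityIntegralTransform

variable {μ : Measure ℝ} [IsProbabilityMeasure μ] {F : ℝ → ℝ}

lemma StrictMono.cdf_mem_Ioo (hmono : StrictMono F) (hF : ∀ x, F x = μ.real (Iic x)) (x : ℝ) :
    F x ∈ Ioo 0 1 :=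
  ⟨((hF _).symm ▸ measureReal_nonneg : 0 ≤ F (x - 1)).trans_lt (hmono (sub_one_lt x)),
    (hmono (lt_add_one x)).trans_le ((hF _).symm ▸ measureReal_le_one : F (x + 1) ≤ 1)⟩

/-- Probability integral transform. -/
lemma StrictMono.map_cdf_eq_restrict_Ioc (hmono : StrictMono F) (hF : ∀ x, F x = μ.real (Iic x))
    (hsurj : Ioo 0 1 ⊆ range F) : μ.map F = volume.restrict (Ioc 0 1) := by
  have hFm : Measurable F := hmono.monotone.measurable
  have := Measure.isProbabilityMeasure_map (μ := μ) hFm.aemeasurable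
  refine Measure.ext_of_Iic _ _ fun a => ?_
  rw [Measure.map_apply hFm measurableSet_Iic, Measure.restrict_apply measurableSet_Iic]
  rcases le_or_gt a 0 with ha0 | ha0
  · have hempty : F ⁻¹' Iic a = ∅ := eq_empty_of_forall_notMem fun x hx =>
      (ha0.trans_lt (hmono.cdf_mem_Ioo hF x).1).not_ge hx
    rw [hempty, Iic_inter_Ioc_of_le (ha0.trans zero_le_one), Ioc_eq_empty ha0.not_gt,
      measure_empty, measure_empty]
  rcases le_or_gt 1 a with ha1 | ha1
  · have huniv : F ⁻¹' Iic a = univ := eq_univ_of_forall fun x =>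
      ((hmono.cdf_mem_Ioo hF x).2.trans_le ha1).le
    rw [huniv, inter_eq_right.mpr fun x hx => hx.2.trans ha1, measure_univ, Real.volume_Ioc,
      sub_zero, ENNReal.ofReal_one]
  obtain ⟨x, rfl⟩ := hsurj ⟨ha0, ha1⟩
  rw [show F ⁻¹' Iic (F x) = Iic x from ext fun y => hmono.le_iff_le,
    Iic_inter_Ioc_of_le ha1.le, Real.volume_Ioc, sub_zero, hF, ofReal_measureReal]

lemma StrictMono.cdf_lt_one_of_density {ρ : ℝ → ℝ} (hmono : StrictMono F)
    (hρ_nonneg : ∀ t, 0 ≤ ρ t) (hρ_int : ∫ t, ρ t = 1) (hF : ∀ x, F x = ∫ t in Iic x, ρ t)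
    (x : ℝ) : F x < 1 := by
  have hρ : Integrable ρ := Integrable.of_integral_ne_zero (by simp [hρ_int])
  calc F x < F (x + 1) := hmono (lt_add_one x)
    _ ≤ ∫ t, ρ t := hF (x + 1) ▸ setIntegral_le_integral hρ (ae_of_all _ hρ_nonneg)
    _ = 1 := hρ_int

end ProbabilityIntegralTransform

section Quantile

variable {ι : Type*} [Fintype ι] {μ : ι → Measure ℝ} [∀ i, IsProbabilityMeasure (μ i)]
  {F : ι → ℝ → ℝ}

lemma map_pi_cdf_eq_restrict_pi_Ioc (hmono : ∀ i, StrictMono (F i))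
    (hF : ∀ i x, F i x = (μ i).real (Iic x)) (hsurj : ∀ i, Ioo 0 1 ⊆ range (F i)) :
    (Measure.pi μ).map (fun y i => F i (y i)) = volume.restrict (univ.pi fun _ => Ioc 0 1) := by
  have hFm : ∀ i, Measurable (F i) := fun i => (hmono i).monotone.measurable
  have := fun i => Measure.isProbabilityMeasure_map (μ := μ i) (hFm i).aemeasurable
  rw [Measure.pi_map_pi fun i => (hFm i).aemeasurable, volume_pi, Measure.restrict_pi_pi]
  simp_rw [(hmono _).map_cdf_eq_restrict_Ioc (hF _) (hsurj _)]

lemma setIntegral_pi_Ioc_comp_quantile {E : Type*} [NormedAddCommGroup E] [NormedSpace ℝ E]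
    {Finv : ι → ℝ → ℝ} (hmono : ∀ i, StrictMono (F i)) (hF : ∀ i x, F i x = (μ i).real (Iic x))
    (hFinv : ∀ i p, p ∈ Ioo 0 1 → F i (Finv i p) = p) (g : (ι → ℝ) → E) {t : ι → ℝ}
    (ht : ∀ i, t i ≤ 1) :
    ∫ v in univ.pi (fun i => Ioc 0 (t i)), g (fun i => Finv i (v i))
      = ∫ y in univ.pi (fun i => F i ⁻¹' Iic (t i)), g y ∂Measure.pi μ := by
  set T : (ι → ℝ) → ι → ℝ := fun y i => F i (y i)
  have hT : MeasurableEmbedding T :=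
    Measurable.measurableEmbedding
      (measurable_pi_lambda _ fun i => (hmono i).monotone.measurable.comp (measurable_pi_apply i))
      fun y z h => funext fun i => (hmono i).injective (congrFun h i)
  have hbox : (volume : Measure (ι → ℝ)).restrict (univ.pi fun i => Ioc 0 (t i))
      = ((Measure.pi μ).map T).restrict (univ.pi fun i => Ioc 0 (t i)) := by
    rw [map_pi_cdf_eq_restrict_pi_Ioc hmono hF fun i p hp => ⟨Finv i p, hFinv i p hp⟩,
      Measure.restrict_restrict (.univ_pi fun _ => measurableSet_Ioc),
      inter_eq_left.mpr (pi_mono fun i _ => Ioc_subset_Ioc_right (ht i))]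
  have hpre : T ⁻¹' (univ.pi fun i => Ioc 0 (t i)) = univ.pi fun i => F i ⁻¹' Iic (t i) := by
    ext y
    simp [T, (hmono _).cdf_mem_Ioo (hF _) _ |>.1]
  have hFinv_F : ∀ y, (fun i => Finv i (T y i)) = y := fun y => funext fun i =>
    (hmono i).injective (hFinv i _ ((hmono i).cdf_mem_Ioo (hF i) (y i)))
  rw [hbox, hT.setIntegral_map, hpre]
  simp only [hFinv_F]

end Quantile

lemma setIntegral_pi_Ioc_comp_quantile_eq_setIntegral_mul_density {ι : Type*} [Fintype ι]
    {ρ F Finv : ι → ℝ → ℝ}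
    (hmono : ∀ i, StrictMono (F i)) (hρ_nonneg : ∀ i t, 0 ≤ ρ i t) (hρ_int : ∀ i, ∫ t, ρ i t = 1)
    (hF : ∀ i x, F i x = ∫ t in Iic x, ρ i t) (hFinv : ∀ i p, p ∈ Ioo 0 1 → F i (Finv i p) = p)
    (g : (ι → ℝ) → ℝ) {t : ι → ℝ} (ht : ∀ i, t i ≤ 1) :
    ∫ v in univ.pi (fun i => Ioc 0 (t i)), g (fun i => Finv i (v i))
      = ∫ y in univ.pi (fun i => F i ⁻¹' Iic (t i)), g y * ∏ i, ρ i (y i) := by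
  have hρ : ∀ i, Integrable (ρ i) := fun i => Integrable.of_integral_ne_zero (by simp [hρ_int])
  let μ : ι → Measure ℝ := fun i => volume.withDensity fun t => ENNReal.ofReal (ρ i t)
  have : ∀ i, IsProbabilityMeasure (μ i) := fun i =>
    isProbabilityMeasure_withDensity_ofReal (ae_of_all _ (hρ_nonneg i)) (hρ_int i)
  have hμ_cdf : ∀ i x, F i x = (μ i).real (Iic x) := fun i x => by
    rw [measureReal_withDensity_ofReal (ae_of_all _ (hρ_nonneg i)) (hρ i) measurableSet_Iic, hF]
  have hμ_pi : Measure.pi μ = volume.withDensity fun y => ENNReal.ofReal (∏ i, ρ i (y i)) :=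
    Measure.pi_withDensity_ofReal hρ_nonneg hρ
  have hρ_prod : Integrable fun y : ι → ℝ => ∏ i, ρ i (y i) := Integrable.fintype_prod hρ
  rw [setIntegral_pi_Ioc_comp_quantile hmono hμ_cdf hFinv g ht, hμ_pi,
    setIntegral_withDensity_ofReal (ae_of_all _ fun y => Finset.prod_nonneg fun i _ =>
      hρ_nonneg i (y i)) hρ_prod.aemeasurable]

theorem stmt_4_general {d : ℕ} (u : Finset (Fin d))
    (F Finv ρj : Fin d → ℝ → ℝ)
    (hF_mono : ∀ j, StrictMono (F j))
    (hF_cdf : ∀ j x, F j x = ∫ t in Iic x, ρj j t)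
    (hρj_nonneg : ∀ j t, 0 ≤ ρj j t)
    (hρj_int : ∀ j, ∫ t, ρj j t = 1)
    -- `Finv j` is the quantile function of `F j`
    (hFinv : ∀ j p, p ∈ Ioo (0:ℝ) 1 → F j (Finv j p) = p)
    (we : (Fin d → ℝ) → ℝ) (hwe_nonneg : ∀ x, 0 ≤ we x)
    (xu : ∀ _ : u, ℝ)
    -- `E_{F_ind}[w_e(x_u^w, Y_{∼u})]` is positive and finite
    (hEu_pos : 0 < ∫ y : ∀ _ : (uᶜ : Finset (Fin d)), ℝ,
        we (combine u xu y) * ∏ j : (uᶜ : Finset (Fin d)), ρj j.1 (y j))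
    (hEu_int : Integrable (fun y : ∀ _ : (uᶜ : Finset (Fin d)), ℝ =>
        we (combine u xu y) * ∏ j : (uᶜ : Finset (Fin d)), ρj j.1 (y j))) :
    -- (i) `W(·; x_u^w)` is a CDF on `[0,1]^{d-|u|}`
    (∃ ν : Measure (∀ _ : (uᶜ : Finset (Fin d)), ℝ), IsProbabilityMeasure ν ∧
      ∀ t : ∀ _ : (uᶜ : Finset (Fin d)), ℝ, (∀ j, t j ∈ Icc (0:ℝ) 1) →
        (∫ v in univ.pi (fun j => Ioc (0:ℝ) (t j)),
            we (combine u xu (fun j => Finv j.1 (v j))))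
          / (∫ y : ∀ _ : (uᶜ : Finset (Fin d)), ℝ,
              we (combine u xu y) * ∏ j : (uᶜ : Finset (Fin d)), ρj j.1 (y j))
        = (ν (univ.pi fun j => Iic (t j))).toReal) ∧
    -- (ii) the conditional CDF of `X^w_{∼u}` given `X^w_u = x_u^w` equals
    -- `W` evaluated at the marginal CDFs
    (∀ xv : ∀ _ : (uᶜ : Finset (Fin d)), ℝ,
      (∫ y in univ.pi (fun j => Iic (xv j)),
          we (combine u xu y) * ∏ j : (uᶜ : Finset (Fin d)), ρj j.1 (y j))
        / (∫ y : ∀ _ : (uᶜ : Finset (Fin d)), ℝ,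
            we (combine u xu y) * ∏ j : (uᶜ : Finset (Fin d)), ρj j.1 (y j))
      = (∫ v in univ.pi (fun j => Ioc (0:ℝ) (F j.1 (xv j))),
            we (combine u xu (fun j => Finv j.1 (v j))))
          / (∫ y : ∀ _ : (uᶜ : Finset (Fin d)), ℝ,
              we (combine u xu y) * ∏ j : (uᶜ : Finset (Fin d)), ρj j.1 (y j))) := by
  set f : ((uᶜ : Finset (Fin d)) → ℝ) → ℝ := fun y => we (combine u xu y) * ∏ j, ρj j.1 (y j)
  set T : ((uᶜ : Finset (Fin d)) → ℝ) → (uᶜ : Finset (Fin d)) → ℝ := fun y j => F j.1 (y j)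
  have hW : ∀ t : (uᶜ : Finset (Fin d)) → ℝ, (∀ j, t j ≤ 1) →
      ∫ v in univ.pi (fun j => Ioc 0 (t j)), we (combine u xu (fun j => Finv j.1 (v j)))
        = ∫ y in T ⁻¹' univ.pi (fun j => Iic (t j)), f y := fun t ht =>
    setIntegral_pi_Ioc_comp_quantile_eq_setIntegral_mul_density (fun j => hF_mono j.1)
      (fun j => hρj_nonneg j.1) (fun j => hρj_int j.1) (fun j => hF_cdf j.1) (fun j => hFinv j.1)
      (fun y => we (combine u xu y)) ht
  have hf_nonneg : ∀ y, 0 ≤ f y := fun y =>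
    mul_nonneg (hwe_nonneg _) (Finset.prod_nonneg fun j _ => hρj_nonneg j.1 (y j))
  have hT : Measurable T :=
    measurable_pi_lambda _ fun j => (hF_mono j.1).monotone.measurable.comp (measurable_pi_apply j)
  have := isProbabilityMeasure_normalizedWithDensity (ae_of_all _ hf_nonneg) hEu_int hEu_pos
  refine ⟨⟨(normalizedWithDensity volume f).map T, Measure.isProbabilityMeasure_map hT.aemeasurable,
    fun t ht => ?_⟩, fun xv => ?_⟩
  · have hbox : MeasurableSet (univ.pi fun j => Iic (t j)) := .univ_pi fun _ => measurableSet_Iic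
    rw [← measureReal_def, map_measureReal_apply hT hbox,
      normalizedWithDensity_real_apply (ae_of_all _ hf_nonneg) hEu_int (hT hbox),
      hW t fun j => (ht j).2]
  · rw [hW _ fun j => (hF_mono j.1).cdf_lt_one_of_density (hρj_nonneg j.1) (hρj_int j.1)
      (hF_cdf j.1) (xv j) |>.le]
    congr 3
    ext y
    simp only [T, mem_preimage, mem_univ_pi, mem_Iic, (hF_mono _).le_iff_le]

/-- Theorem 1 of the paper: with `X^w ∼ F_ind^{w_e}`, all marginals
continuous and strictly increasing, `u ⊊ {1,…,d}`, the function
`W(t; x_u^w) := E_{V}[w_e(x_u^w, F^{-1}(V))] ∏_j t_j / E_{F_ind}[w_e(x_u^w, Y_{∼u})]`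
(equivalently, the normalized integral of `w_e(x_u^w, F^{-1}(·))` over the box
`∏_j (0, t_j]`) is a CDF on `[0,1]^{d-|u|}`, and the conditional CDF satisfies
`F^w_{∼u|u}(x_{∼u}|x_u^w) = W(F_{π_1}(x_{π_1}),…,F_{π_{|π|}}(x_{π_{|π|}}); x_u^w)`. -/
theorem stmt_4 {d : ℕ} (u : Finset (Fin d)) (hu : u ≠ Finset.univ)
    (F Finv ρj : Fin d → ℝ → ℝ)
    (hF_cont : ∀ j, Continuous (F j))
    (hF_mono : ∀ j, StrictMono (F j))
    (hF_cdf : ∀ j x, F j x = ∫ t in Iic x, ρj j t)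
    (hρj_nonneg : ∀ j t, 0 ≤ ρj j t)
    (hρj_meas : ∀ j, Measurable (ρj j))
    (hρj_int : ∀ j, ∫ t, ρj j t = 1)
    -- `Finv j` is the quantile function of `F j`
    (hFinv : ∀ j p, p ∈ Ioo (0:ℝ) 1 → F j (Finv j p) = p)
    (we : (Fin d → ℝ) → ℝ) (hwe_nonneg : ∀ x, 0 ≤ we x) (hwe_meas : Measurable we)
    (xu : ∀ _ : u, ℝ)
    -- `E_{F_ind}[w_e(x_u^w, Y_{∼u})]` is positive and finite
    (hEu_pos : 0 < ∫ y : ∀ _ : (uᶜ : Finset (Fin d)), ℝ,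
        we (combine u xu y) * ∏ j : (uᶜ : Finset (Fin d)), ρj j.1 (y j))
    (hEu_int : Integrable (fun y : ∀ _ : (uᶜ : Finset (Fin d)), ℝ =>
        we (combine u xu y) * ∏ j : (uᶜ : Finset (Fin d)), ρj j.1 (y j))) :
    -- (i) `W(·; x_u^w)` is a CDF on `[0,1]^{d-|u|}`
    (∃ ν : Measure (∀ _ : (uᶜ : Finset (Fin d)), ℝ), IsProbabilityMeasure ν ∧
      ∀ t : ∀ _ : (uᶜ : Finset (Fin d)), ℝ, (∀ j, t j ∈ Icc (0:ℝ) 1) →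
        (∫ v in univ.pi (fun j => Ioc (0:ℝ) (t j)),
            we (combine u xu (fun j => Finv j.1 (v j))))
          / (∫ y : ∀ _ : (uᶜ : Finset (Fin d)), ℝ,
              we (combine u xu y) * ∏ j : (uᶜ : Finset (Fin d)), ρj j.1 (y j))
        = (ν (univ.pi fun j => Iic (t j))).toReal) ∧
    -- (ii) the conditional CDF of `X^w_{∼u}` given `X^w_u = x_u^w` equals
    -- `W` evaluated at the marginal CDFs
    (∀ xv : ∀ _ : (uᶜ : Finset (Fin d)), ℝ,
      (∫ y in univ.pi (fun j => Iic (xv j)),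
          we (combine u xu y) * ∏ j : (uᶜ : Finset (Fin d)), ρj j.1 (y j))
        / (∫ y : ∀ _ : (uᶜ : Finset (Fin d)), ℝ,
            we (combine u xu y) * ∏ j : (uᶜ : Finset (Fin d)), ρj j.1 (y j))
      = (∫ v in univ.pi (fun j => Ioc (0:ℝ) (F j.1 (xv j))),
            we (combine u xu (fun j => Finv j.1 (v j))))
          / (∫ y : ∀ _ : (uᶜ : Finset (Fin d)), ℝ,
              we (combine u xu y) * ∏ j : (uᶜ : Finset (Fin d)), ρj j.1 (y j))) :=
  stmt_4_general u F Finv ρj hF_mono hF_cdf hρj_nonneg hρj_int hFinv we hwe_nonneg xu hEu_pos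
    hEu_int
end

section
/- With u = ∅ in the previous construction: defining W(u_1,…,u_d) := E_V[w_e(F_1^{-1}(V_1),…,F_d^{-1}(V_d))] / E_{F_ind}[w_e(Y)] · ∏_{k=1}^d u_k with independent V_k ∼ U(0,u_k), the joint CDF of X^w satisfies F^w(x) = W(F_1(x_1),…,F_d(x_d)) for all x ∈ ℝ^d. -/
open MeasureTheory Set

private lemma lintegral_fin_pi_prod : ∀ {n : ℕ} (h : Fin n → ℝ → ENNReal),
    (∀ j, Measurable (h j)) →
    ∫⁻ y : Fin n → ℝ, ∏ j, h j (y j) = ∏ j, ∫⁻ t : ℝ, h j t := by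
  intro n
  induction n with
  | zero => intro h _; simp [volume_pi]
  | succ n ih =>
    intro h hm
    have hmf : Measurable fun y : Fin (n + 1) → ℝ => ∏ j, h j (y j) :=
      Finset.measurable_prod _ fun j _ => (hm j).comp (measurable_pi_apply j)
    have A := (measurePreserving_piFinSuccAbove (fun _ : Fin (n + 1) => (volume : Measure ℝ)) 0).symm
    calc ∫⁻ y : Fin (n + 1) → ℝ, ∏ j, h j (y j)
        = ∫⁻ y, (∏ j, h j (y j)) ∂(Measure.pi fun _ => volume) := by rw [volume_pi]
      _ = ∫⁻ z, (∏ j, h j ((MeasurableEquiv.piFinSuccAbove (fun _ : Fin (n+1) => ℝ) 0).symm z j))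
            ∂((volume : Measure ℝ).prod (Measure.pi fun _ : Fin n => volume)) := by
          rw [← A.map_eq, lintegral_map hmf A.measurable]
      _ = ∫⁻ z : ℝ × (Fin n → ℝ), h 0 z.1 * ∏ j : Fin n, h j.succ (z.2 j)
            ∂((volume : Measure ℝ).prod (Measure.pi fun _ : Fin n => volume)) := by
          simp_rw [MeasurableEquiv.piFinSuccAbove_symm_apply, Fin.insertNthEquiv,
            Equiv.coe_fn_mk, Fin.insertNth_zero, Fin.prod_univ_succ]
          simp
      _ = (∫⁻ t, h 0 t) * ∫⁻ y : Fin n → ℝ, (∏ j : Fin n, h j.succ (y j))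
            ∂(Measure.pi fun _ : Fin n => volume) := by
          exact lintegral_prod_mul (μ := (volume : Measure ℝ))
            (ν := Measure.pi fun _ : Fin n => volume) (hm 0).aemeasurable
            ((Finset.measurable_prod Finset.univ fun (j : Fin n) _ =>
              (hm j.succ).comp (measurable_pi_apply j)).aemeasurable)
      _ = ∏ j, ∫⁻ t : ℝ, h j t := by
          rw [← volume_pi, ih (fun j => h j.succ) (fun j => hm j.succ), Fin.prod_univ_succ]

/-- with `u = ∅`, defining
`W(t_1,…,t_d) := E_V[w_e(F_1^{-1}(V_1),…,F_d^{-1}(V_d))] ∏_k t_k / E_{F_ind}[w_e(Y)]`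
(with independent `V_k ∼ U(0,t_k)`, i.e. the normalized integral of
`w_e ∘ F^{-1}` over the box `∏_k (0,t_k]`), the joint CDF of `X^w` satisfies
`F^w(x) = W(F_1(x_1),…,F_d(x_d))` for all `x ∈ ℝ^d`. -/
theorem stmt_5 {d : ℕ} (F Finv ρj : Fin d → ℝ → ℝ)
    (hF_cont : ∀ j, Continuous (F j))
    (hF_mono : ∀ j, StrictMono (F j))
    (hF_cdf : ∀ j x, F j x = ∫ t in Iic x, ρj j t)
    (hρj_nonneg : ∀ j t, 0 ≤ ρj j t)
    (hρj_meas : ∀ j, Measurable (ρj j))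
    (hρj_int : ∀ j, ∫ t, ρj j t = 1)
    (hFinv : ∀ j p, p ∈ Ioo (0:ℝ) 1 → F j (Finv j p) = p)
    (we : (Fin d → ℝ) → ℝ) (hwe_nonneg : ∀ x, 0 ≤ we x) (hwe_meas : Measurable we)
    (hE_pos : 0 < ∫ y : Fin d → ℝ, we y * ∏ j, ρj j (y j))
    (hE_int : Integrable (fun y : Fin d → ℝ => we y * ∏ j, ρj j (y j))) :
    ∀ x : Fin d → ℝ,
      -- `F^w(x)`, the CDF of the weighted distribution with density
      -- `w_e(y) ∏_j ρ_j(y_j) / E_{F_ind}[w_e(Y)]` …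
      (∫ y in univ.pi (fun j => Iic (x j)), we y * ∏ j, ρj j (y j))
          / (∫ y : Fin d → ℝ, we y * ∏ j, ρj j (y j))
        = -- … equals `W(F_1(x_1),…,F_d(x_d))`
          (∫ v in univ.pi (fun j => Ioc (0:ℝ) (F j (x j))), we (fun j => Finv j (v j)))
            / (∫ y : Fin d → ℝ, we y * ∏ j, ρj j (y j)) := by
  intro x
  -- integrability of the marginal densities
  have hρ_int : ∀ j, Integrable (ρj j) := by
    intro j
    by_contra h
    have := hρj_int j
    rw [integral_undef h] at this
    norm_num at this
  -- the CDFs take values in (0,1)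
  have hF01 : ∀ j y, F j y ∈ Ioo (0:ℝ) 1 := by
    intro j y
    constructor
    · have h0 : 0 ≤ F j (y - 1) := by
        rw [hF_cdf j (y - 1)]
        exact setIntegral_nonneg measurableSet_Iic fun t _ => hρj_nonneg j t
      exact lt_of_le_of_lt h0 (hF_mono j (by linarith))
    · have h1 : F j (y + 1) ≤ 1 := by
        rw [hF_cdf j (y + 1), ← hρj_int j]
        exact setIntegral_le_integral (hρ_int j)
          (Filter.Eventually.of_forall fun t => hρj_nonneg j t)
      exact lt_of_lt_of_le (hF_mono j (by linarith)) h1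
  have hFinv_F : ∀ j y, Finv j (F j y) = y := fun j y =>
    (hF_mono j).injective (hFinv j _ (hF01 j y))
  -- per-coordinate weighted measures
  set μj : Fin d → Measure ℝ :=
    fun j => volume.withDensity (fun t => ENNReal.ofReal (ρj j t)) with hμj_def
  have hμj_apply : ∀ j (s : Set ℝ), MeasurableSet s →
      μj j s = ∫⁻ t in s, ENNReal.ofReal (ρj j t) := fun j s hs => withDensity_apply _ hs
  have hμj_Iic : ∀ j a, μj j (Iic a) = ENNReal.ofReal (F j a) := by
    intro j a
    rw [hμj_apply j _ measurableSet_Iic,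
      ← ofReal_integral_eq_lintegral_ofReal ((hρ_int j).integrableOn)
        (Filter.Eventually.of_forall fun t => hρj_nonneg j t), ← hF_cdf]
  have hμj_univ : ∀ j, μj j univ = 1 := by
    intro j
    rw [hμj_apply j _ MeasurableSet.univ, Measure.restrict_univ,
      ← ofReal_integral_eq_lintegral_ofReal (hρ_int j)
        (Filter.Eventually.of_forall fun t => hρj_nonneg j t), hρj_int j, ENNReal.ofReal_one]
  haveI hμj_prob : ∀ j, IsProbabilityMeasure (μj j) := fun j => ⟨hμj_univ j⟩
  haveI : ∀ j, SigmaFinite (μj j) := fun j => inferInstance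
  -- the pushforward of `μj j` by `F j` is the uniform measure on `(0,1)`
  have hmap : ∀ j, Measure.map (F j) (μj j) = volume.restrict (Ioo (0:ℝ) 1) := by
    intro j
    haveI := Measure.isProbabilityMeasure_map (μ := μj j) (hF_cont j).measurable.aemeasurable (f := F j)
    refine Measure.ext_of_Iic _ _ fun a => ?_
    rw [Measure.map_apply (hF_cont j).measurable measurableSet_Iic,
      Measure.restrict_apply measurableSet_Iic]
    rcases le_or_gt a 0 with h0 | h0
    · have h1 : F j ⁻¹' Iic a = ∅ := by
        ext y
        simp only [mem_preimage, mem_Iic, mem_empty_iff_false, iff_false, not_le]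
        exact lt_of_le_of_lt h0 (hF01 j y).1
      have h2 : Iic a ∩ Ioo (0:ℝ) 1 = ∅ := by
        ext t
        simp only [mem_inter_iff, mem_Iic, mem_Ioo, mem_empty_iff_false, iff_false]
        rintro ⟨ht, ht0, -⟩; linarith
      rw [h1, h2]; simp
    rcases lt_or_ge a 1 with h1 | h1
    · have hFa : F j (Finv j a) = a := hFinv j a ⟨h0, h1⟩
      have hpre : F j ⁻¹' Iic a = Iic (Finv j a) := by
        ext y
        simp only [mem_preimage, mem_Iic]
        conv_lhs => rw [← hFa]
        exact (hF_mono j).le_iff_le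
      have hint : Iic a ∩ Ioo (0:ℝ) 1 = Ioc 0 a := by
        ext t
        simp only [mem_inter_iff, mem_Iic, mem_Ioo, mem_Ioc]
        constructor
        · rintro ⟨ht, ht0, -⟩; exact ⟨ht0, ht⟩
        · rintro ⟨ht0, ht⟩; exact ⟨ht, ht0, lt_of_le_of_lt ht h1⟩
      rw [hpre, hint, hμj_Iic j, hFa, Real.volume_Ioc]
      norm_num
    · have hpre : F j ⁻¹' Iic a = univ := by
        ext y
        simp only [mem_preimage, mem_Iic, mem_univ, iff_true]
        exact le_of_lt (lt_of_lt_of_le (hF01 j y).2 h1)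
      have hint : Iic a ∩ Ioo (0:ℝ) 1 = Ioo 0 1 := by
        ext t
        simp only [mem_inter_iff, mem_Iic, mem_Ioo]
        exact ⟨fun h => h.2, fun h => ⟨le_of_lt (lt_of_lt_of_le h.2 h1), h⟩⟩
      rw [hpre, hint, hμj_univ j, Real.volume_Ioo]
      norm_num
  -- the coordinatewise CDF map
  set Φ : (Fin d → ℝ) → (Fin d → ℝ) := fun y j => F j (y j) with hΦ_def
  have hΦ_cont : Continuous Φ :=
    continuous_pi fun j => (hF_cont j).comp (continuous_apply j)
  have hΦ_meas : Measurable Φ := hΦ_cont.measurable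
  have hΦ_inj : Function.Injective Φ := by
    intro y y' h
    funext j
    exact (hF_mono j).injective (congrFun h j)
  have hΦ_emb : MeasurableEmbedding Φ := hΦ_cont.measurableEmbedding hΦ_inj
  -- the joint weighted measure is the product of the marginals
  set D : (Fin d → ℝ) → ENNReal := fun y => ENNReal.ofReal (∏ j, ρj j (y j)) with hD_def
  have hD_meas : Measurable D :=
    ENNReal.measurable_ofReal.comp
      (Finset.measurable_prod _ fun j _ => (hρj_meas j).comp (measurable_pi_apply j))
  have hwd : (volume : Measure (Fin d → ℝ)).withDensity D = Measure.pi μj := by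
    refine (Measure.pi_eq fun s hs => ?_).symm
    rw [withDensity_apply _ (MeasurableSet.univ_pi hs),
      ← lintegral_indicator (MeasurableSet.univ_pi hs)]
    have hind : ∀ y : Fin d → ℝ, (univ.pi s).indicator D y
        = ∏ j, (s j).indicator (fun t => ENNReal.ofReal (ρj j t)) (y j) := by
      intro y
      by_cases hy : y ∈ univ.pi s
      · rw [indicator_of_mem hy]
        show ENNReal.ofReal (∏ j, ρj j (y j)) = _
        rw [ENNReal.ofReal_prod_of_nonneg (fun j _ => hρj_nonneg j (y j))]
        exact Finset.prod_congr rfl fun j _ =>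
          (indicator_of_mem (hy j (mem_univ j)) (fun t => ENNReal.ofReal (ρj j t))).symm
      · rw [indicator_of_notMem hy]
        rw [mem_pi] at hy
        push_neg at hy
        obtain ⟨j, -, hj⟩ := hy
        exact (Finset.prod_eq_zero (Finset.mem_univ j) (indicator_of_notMem hj _)).symm
    calc ∫⁻ y, (univ.pi s).indicator D y
        = ∫⁻ y : Fin d → ℝ, ∏ j, (s j).indicator (fun t => ENNReal.ofReal (ρj j t)) (y j) := by
          exact lintegral_congr hind
      _ = ∏ j, ∫⁻ t, (s j).indicator (fun t => ENNReal.ofReal (ρj j t)) t :=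
          lintegral_fin_pi_prod _ fun j =>
            (ENNReal.measurable_ofReal.comp (hρj_meas j)).indicator (hs j)
      _ = ∏ j, μj j (s j) := by
          refine Finset.prod_congr rfl fun j _ => ?_
          rw [lintegral_indicator (hs j), hμj_apply j _ (hs j)]
  -- pushforward of the product measure
  have hmap_pi : Measure.map Φ (Measure.pi μj)
      = Measure.pi (fun _ : Fin d => volume.restrict (Ioo (0:ℝ) 1)) := by
    refine (Measure.pi_eq fun s hs => ?_).symm
    rw [Measure.map_apply hΦ_meas (MeasurableSet.univ_pi hs)]
    have hpre : Φ ⁻¹' univ.pi s = univ.pi fun j => F j ⁻¹' s j := by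
      ext y; simp [hΦ_def, mem_pi]
    rw [hpre, Measure.pi_pi]
    refine Finset.prod_congr rfl fun j _ => ?_
    rw [← Measure.map_apply (hF_cont j).measurable (hs j), hmap j]
  -- the restricted Lebesgue measure as a product
  have hν : (volume : Measure (Fin d → ℝ)).restrict (univ.pi fun _ => Ioo (0:ℝ) 1)
      = Measure.pi (fun _ : Fin d => volume.restrict (Ioo (0:ℝ) 1)) := by
    refine (Measure.pi_eq fun s hs => ?_).symm
    rw [Measure.restrict_apply (MeasurableSet.univ_pi hs), ← pi_inter_distrib, volume_pi_pi]
    exact Finset.prod_congr rfl fun j _ =>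
      (Measure.restrict_apply (hs j)).symm
  have hpres : MeasurePreserving Φ ((volume : Measure (Fin d → ℝ)).withDensity D)
      ((volume : Measure (Fin d → ℝ)).restrict (univ.pi fun _ => Ioo (0:ℝ) 1)) :=
    ⟨hΦ_meas, by rw [hwd, hmap_pi, hν]⟩
  -- the two boxes
  set S : Set (Fin d → ℝ) := univ.pi fun j => Iic (x j) with hS_def
  set T : Set (Fin d → ℝ) := univ.pi fun j => Ioc (0:ℝ) (F j (x j)) with hT_def
  have hS_meas : MeasurableSet S := MeasurableSet.univ_pi fun j => measurableSet_Iic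
  have hT_meas : MeasurableSet T := MeasurableSet.univ_pi fun j => measurableSet_Ioc
  have hT_sub : T ⊆ univ.pi fun _ => Ioo (0:ℝ) 1 := by
    intro v hv j _
    have := hv j (mem_univ j)
    exact ⟨this.1, lt_of_le_of_lt this.2 (hF01 j (x j)).2⟩
  -- membership transfer
  have hmem : ∀ y : Fin d → ℝ, Φ y ∈ T ↔ y ∈ S := by
    intro y
    simp only [hT_def, hS_def, mem_pi, mem_univ, forall_true_left, mem_Ioc, mem_Iic, hΦ_def]
    constructor
    · intro h j
      exact (hF_mono j).le_iff_le.mp (h j).2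
    · intro h j
      exact ⟨(hF01 j (y j)).1, (hF_mono j).le_iff_le.mpr (h j)⟩
  -- equality of the numerators
  have key : (∫ y in S, we y * ∏ j, ρj j (y j))
      = ∫ v in T, we (fun j => Finv j (v j)) := by
    set g : (Fin d → ℝ) → ℝ := T.indicator (fun v => we (fun j => Finv j (v j))) with hg_def
    have step1 : (∫ v in T, we (fun j => Finv j (v j)))
        = ∫ v in T, we (fun j => Finv j (v j))
            ∂((volume : Measure (Fin d → ℝ)).restrict (univ.pi fun _ => Ioo (0:ℝ) 1)) := by
      rw [Measure.restrict_restrict hT_meas, inter_eq_self_of_subset_left hT_sub]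
    have step2 : (∫ v in T, we (fun j => Finv j (v j))
            ∂((volume : Measure (Fin d → ℝ)).restrict (univ.pi fun _ => Ioo (0:ℝ) 1)))
        = ∫ v, g v ∂((volume : Measure (Fin d → ℝ)).restrict (univ.pi fun _ => Ioo (0:ℝ) 1)) := by
      rw [hg_def, integral_indicator hT_meas]
    have step3 : (∫ v, g v
            ∂((volume : Measure (Fin d → ℝ)).restrict (univ.pi fun _ => Ioo (0:ℝ) 1)))
        = ∫ y, g (Φ y) ∂((volume : Measure (Fin d → ℝ)).withDensity D) :=
      (hpres.integral_comp hΦ_emb g).symm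
    have step4 : (fun y => g (Φ y)) = S.indicator we := by
      funext y
      by_cases hy : y ∈ S
      · rw [indicator_of_mem hy, hg_def, indicator_of_mem ((hmem y).mpr hy)]
        congr 1
        funext j
        exact hFinv_F j (y j)
      · rw [indicator_of_notMem hy, hg_def,
          indicator_of_notMem (fun h => hy ((hmem y).mp h))]
    have step5 : (∫ y, S.indicator we y ∂((volume : Measure (Fin d → ℝ)).withDensity D))
        = ∫ y in S, we y ∂((volume : Measure (Fin d → ℝ)).withDensity D) :=
      integral_indicator hS_meas
    have step6 : (∫ y in S, we y ∂((volume : Measure (Fin d → ℝ)).withDensity D))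
        = ∫ y in S, we y * ∏ j, ρj j (y j) := by
      have hDnn : D = fun y => ((Real.toNNReal (∏ j, ρj j (y j)) : NNReal) : ENNReal) := rfl
      have hmeasnn : Measurable fun y : Fin d → ℝ => Real.toNNReal (∏ j, ρj j (y j)) :=
        (Finset.measurable_prod _ fun j _ =>
          (hρj_meas j).comp (measurable_pi_apply j)).real_toNNReal
      rw [restrict_withDensity hS_meas, hDnn,
        integral_withDensity_eq_integral_smul hmeasnn we]
      refine setIntegral_congr_fun hS_meas fun y _ => ?_
      have hnn : 0 ≤ ∏ j, ρj j (y j) := Finset.prod_nonneg fun j _ => hρj_nonneg j (y j)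
      simp [NNReal.smul_def, Real.coe_toNNReal _ hnn, mul_comm]
    rw [step1, step2, step3, step4, step5, step6]
  rw [key]
end

section
/- Let k(y,y') = ⟨φ(y), φ(y')⟩ be a symmetric positive-definite kernel with convex feature map φ and φ(0)=0. Let M_u^{fo}(X^w_u) = E_U[M_u^{tot}(X^w_u, U)] with (X^{w'}_u, U') an i.i.d. copy of (X^w_u, U). Then 0 ≤ E[k(M_u^{fo}(X^w_u), M_u^{fo}(X^{w'}_u))] ≤ E[k(M_u^{tot}(X^w_u, U), M_u^{tot}(X^{w'}_u, U'))], provided all expectations are finite. -/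
/-!
Write `U a b = φ (T a b)` and `W a = ∫ b, U a b ∂ν`. Coordinatewise Jensen gives
`0 ≤ φ (∫ b, T a b ∂ν) ≤ W a`, hence `k(M^fo(a), M^fo(a')) ≤ ⟨W a, W a'⟩`, and
`⟨W a, W a'⟩ = ∫ b, ∫ b', ⟨U a b, U a' b'⟩`. Integrating over `a, a'` and reordering the four
integrals by Fubini gives the right-hand side. The only delicate point is that Jensen needs
`b ↦ U a b` to be integrable for almost every `a`; this follows from the integrability of the
kernel because `U` is nonnegative.
-/

open MeasureTheory Filter Finset

namespace MeasurableEquiv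

variable (α β γ δ : Type*) [MeasurableSpace α] [MeasurableSpace β] [MeasurableSpace γ]
  [MeasurableSpace δ]

def prodProdProdComm : (α × β) × (γ × δ) ≃ᵐ (α × γ) × (β × δ) where
  toEquiv := Equiv.prodProdProdComm α β γ δ
  measurable_toFun := by
    change Measurable fun p : (α × β) × (γ × δ) => ((p.1.1, p.2.1), (p.1.2, p.2.2))
    fun_prop
  measurable_invFun := by
    change Measurable fun p : (α × γ) × (β × δ) => ((p.1.1, p.2.1), (p.1.2, p.2.2))
    fun_prop

variable {α β γ δ} in
@[simp]
theorem prodProdProdComm_apply (a : α) (b : β) (c : γ) (d : δ) :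
    prodProdProdComm α β γ δ ((a, b), (c, d)) = ((a, c), (b, d)) :=
  rfl

end MeasurableEquiv

namespace MeasureTheory

theorem measurePreserving_prodProdProdComm {α β γ δ : Type*} [MeasurableSpace α]
    [MeasurableSpace β] [MeasurableSpace γ] [MeasurableSpace δ] (μ : Measure α) (ν : Measure β)
    (ρ : Measure γ) (τ : Measure δ) [SFinite μ] [SFinite ν] [SFinite ρ] [SFinite τ] :
    MeasurePreserving (MeasurableEquiv.prodProdProdComm α β γ δ)
      ((μ.prod ν).prod (ρ.prod τ)) ((μ.prod ρ).prod (ν.prod τ)) := by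
  have hinner : MeasurePreserving
      (MeasurableEquiv.prodAssoc ∘ Prod.map Prod.swap id ∘ MeasurableEquiv.prodAssoc.symm)
      (ν.prod (ρ.prod τ)) (ρ.prod (ν.prod τ)) :=
    (measurePreserving_prodAssoc ρ ν τ).comp <|
      (MeasurePreserving.prod Measure.measurePreserving_swap (MeasurePreserving.id τ)).comp
        (measurePreserving_prodAssoc ν ρ τ).symm
  exact (measurePreserving_prodAssoc μ ρ (ν.prod τ)).symm.comp <|
    ((MeasurePreserving.id μ).prod hinner).comp (measurePreserving_prodAssoc μ ν (ρ.prod τ))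

section Fubini

variable {α β γ δ : Type*} [MeasurableSpace α] [MeasurableSpace β] [MeasurableSpace γ]
  [MeasurableSpace δ] {μ : Measure α} {ν : Measure β} {ρ : Measure γ} {τ : Measure δ}
  [SFinite μ] [SFinite ν] [SFinite ρ] [SFinite τ]
  {E : Type*} [NormedAddCommGroup E] [NormedSpace ℝ E] {f : γ × (α × β) → E}

theorem Integrable.ae_integral_prod_right_eq (hf : Integrable f (ρ.prod (μ.prod ν))) :
    ∀ᵐ x ∂ρ, ∫ y, f (x, y) ∂μ.prod ν = ∫ a, ∫ b, f (x, (a, b)) ∂ν ∂μ :=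
  hf.prod_right_ae.mono fun _ hx => integral_prod _ hx

theorem Integrable.integral_integral_prod_left
    (hf : Integrable f (ρ.prod (μ.prod ν))) :
    Integrable (fun x => ∫ a, ∫ b, f (x, (a, b)) ∂ν ∂μ) ρ :=
  hf.integral_prod_left.congr hf.ae_integral_prod_right_eq

theorem integral_prod_prod {f : (α × β) × (γ × δ) → E}
    (hf : Integrable f ((μ.prod ν).prod (ρ.prod τ))) :
    ∫ z, f z ∂(μ.prod ν).prod (ρ.prod τ) = ∫ a, ∫ b, ∫ c, ∫ d, f ((a, b), (c, d)) ∂τ ∂ρ ∂ν ∂μ := by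
  rw [integral_prod _ hf, integral_congr_ae hf.ae_integral_prod_right_eq,
    integral_prod _ hf.integral_integral_prod_left]

theorem integral_integral_mono_of_nonneg {f : α → β → ℝ} {g : α × β → ℝ}
    (hf : ∀ a b, 0 ≤ f a b) (hg : Integrable g (μ.prod ν))
    (hfg : ∀ᵐ a ∂μ, ∀ᵐ b ∂ν, f a b ≤ g (a, b)) :
    ∫ a, ∫ b, f a b ∂ν ∂μ ≤ ∫ a, ∫ b, g (a, b) ∂ν ∂μ := by
  refine integral_mono_of_nonneg (ae_of_all _ fun a => integral_nonneg (hf a))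
    hg.integral_prod_left ?_
  filter_upwards [hfg, hg.prod_right_ae] with a hfga hga
  exact integral_mono_of_nonneg (ae_of_all _ (hf a)) hga hfga

end Fubini

section SumMul

variable {ι α β : Type*} [Fintype ι] [MeasurableSpace α] [MeasurableSpace β]
  {μ : Measure α} {ν : Measure β}

theorem integral_integral_sum_mul {f : α → ι → ℝ} {g : β → ι → ℝ}
    (hf : ∀ i, Integrable (fun a => f a i) μ) (hg : ∀ i, Integrable (fun b => g b i) ν) :
    ∫ a, ∫ b, ∑ i, f a i * g b i ∂ν ∂μ = ∑ i, (∫ a, f a i ∂μ) * ∫ b, g b i ∂ν := by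
  have hinner : ∀ a, ∫ b, ∑ i, f a i * g b i ∂ν = ∑ i, f a i * ∫ b, g b i ∂ν := fun a => by
    rw [integral_finsetSum _ fun i _ => (hg i).const_mul _]
    simp only [integral_const_mul]
  simp only [hinner]
  rw [integral_finsetSum _ fun i _ => (hf i).mul_const _]
  simp only [integral_mul_const]

theorem exists_integrable_ge_of_integrable_sum_mul {U : α → ι → ℝ} [SFinite μ]
    (hU : ∀ x i, 0 ≤ U x i)
    (hF : Integrable (fun z : α × α => ∑ j, U z.1 j * U z.2 j) (μ.prod μ)) (i : ι) :
    ∃ h : α → ℝ, Integrable h μ ∧ ∀ᵐ x ∂μ, U x i ≤ h x := by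
  by_cases hzero : ∀ᵐ x ∂μ, U x i = 0
  · exact ⟨0, integrable_zero _ _ _, hzero.mono fun _ hx => hx.le⟩
  -- Otherwise dominate `U · i` by the kernel slice at a point `y` with `U y i > 0`.
  obtain ⟨y, hy, hyi⟩ := (hF.prod_left_ae.and_frequently (not_eventually.mp hzero)).exists
  have hpos : 0 < U y i := (hU y i).lt_of_ne' hyi
  refine ⟨fun x => (U y i)⁻¹ * ∑ j, U x j * U y j, hy.const_mul _, ae_of_all _ fun x => ?_⟩
  calc U x i = (U y i)⁻¹ * (U x i * U y i) := by field_simp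
    _ ≤ (U y i)⁻¹ * ∑ j, U x j * U y j := by
      gcongr
      exact single_le_sum (f := fun j => U x j * U y j)
        (fun j _ => mul_nonneg (hU x j) (hU y j)) (mem_univ i)

variable [SFinite μ] [SFinite ν]

theorem ae_integrable_of_integrable_sum_mul {U : α → β → ι → ℝ}
    (hU : ∀ a b i, 0 ≤ U a b i) (hUm : ∀ a i, AEStronglyMeasurable (fun b => U a b i) ν)
    (hF : Integrable (fun p : (α × β) × (α × β) => ∑ i, U p.1.1 p.1.2 i * U p.2.1 p.2.2 i)
      ((μ.prod ν).prod (μ.prod ν))) :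
    ∀ᵐ a ∂μ, ∀ i, Integrable (fun b => U a b i) ν := by
  refine ae_all_iff.mpr fun i => ?_
  obtain ⟨h, hh, hUh⟩ := exists_integrable_ge_of_integrable_sum_mul
    (U := fun p : α × β => U p.1 p.2) (fun p => hU p.1 p.2) hF i
  filter_upwards [hh.prod_right_ae, Measure.ae_ae_of_ae_prod hUh] with a ha hle
  exact ha.mono' (hUm a i) (hle.mono fun b hb => (Real.norm_of_nonneg (hU a b i)).trans_le hb)

theorem integral_integral_sum_mul_le {U : α → β → ι → ℝ} {V : α → ι → ℝ}
    (hU : ∀ a b i, 0 ≤ U a b i) (hUm : ∀ a i, AEStronglyMeasurable (fun b => U a b i) ν)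
    (hV : ∀ a i, 0 ≤ V a i)
    (hVU : ∀ a, (∀ i, Integrable (fun b => U a b i) ν) → ∀ i, V a i ≤ ∫ b, U a b i ∂ν)
    (hF : Integrable (fun p : (α × β) × (α × β) => ∑ i, U p.1.1 p.1.2 i * U p.2.1 p.2.2 i)
      ((μ.prod ν).prod (μ.prod ν))) :
    ∫ a, ∫ a', ∑ i, V a i * V a' i ∂μ ∂μ
      ≤ ∫ a, ∫ b, ∫ a', ∫ b', ∑ i, U a b i * U a' b' i ∂ν ∂μ ∂ν ∂μ := by
  set e := MeasurableEquiv.prodProdProdComm α α β β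
  have he := measurePreserving_prodProdProdComm μ μ ν ν
  have hFe := (he.integrable_comp_emb e.measurableEmbedding).mpr hF
  have hfib := ae_integrable_of_integrable_sum_mul hU hUm hF
  calc ∫ a, ∫ a', ∑ i, V a i * V a' i ∂μ ∂μ
      ≤ ∫ a, ∫ a', ∫ b, ∫ b', ∑ i, U a b i * U a' b' i ∂ν ∂ν ∂μ ∂μ := by
        refine integral_integral_mono_of_nonneg
          (fun a a' => sum_nonneg fun i _ => mul_nonneg (hV a i) (hV a' i))
          hFe.integral_integral_prod_left ?_
        filter_upwards [hfib] with a ha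
        filter_upwards [hfib] with a' ha'
        simp only [Function.comp_apply, MeasurableEquiv.prodProdProdComm_apply]
        rw [integral_integral_sum_mul ha ha']
        exact sum_le_sum fun i _ => mul_le_mul (hVU a ha i) (hVU a' ha' i) (hV a' i)
          (integral_nonneg fun b => hU a b i)
    _ = ∫ z, ∑ i, U (e z).1.1 (e z).1.2 i * U (e z).2.1 (e z).2.2 i
          ∂(μ.prod μ).prod (ν.prod ν) := (integral_prod_prod hFe).symm
    _ = ∫ a, ∫ b, ∫ a', ∫ b', ∑ i, U a b i * U a' b' i ∂ν ∂μ ∂ν ∂μ :=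
        (he.integral_comp' _).trans (integral_prod_prod hF)

end SumMul

end MeasureTheory

theorem stmt_7_general {α β : Type*} [MeasurableSpace α] [MeasurableSpace β]
    (μ : Measure α) (ν : Measure β) [IsProbabilityMeasure μ] [IsProbabilityMeasure ν]
    {N L : ℕ} (φ : (Fin N → ℝ) → (Fin L → ℝ))
    (hφ_conv : ∀ i, ConvexOn ℝ Set.univ fun y => φ y i)
    (hφ_nonneg : ∀ y i, 0 ≤ φ y i)
    (T : α → β → (Fin N → ℝ))  -- the total sensitivity functional `M_u^{tot}`
    (hT_int : ∀ a, Integrable (T a) ν)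
    (h_fin_tot : Integrable
      (fun p : (α × β) × (α × β) => ∑ i, φ (T p.1.1 p.1.2) i * φ (T p.2.1 p.2.2) i)
      ((μ.prod ν).prod (μ.prod ν))) :
    0 ≤ (∫ a, ∫ a', ∑ i, φ (∫ b, T a b ∂ν) i * φ (∫ b, T a' b ∂ν) i ∂μ ∂μ) ∧
    (∫ a, ∫ a', ∑ i, φ (∫ b, T a b ∂ν) i * φ (∫ b, T a' b ∂ν) i ∂μ ∂μ)
      ≤ ∫ a, ∫ b, ∫ a', ∫ b', ∑ i, φ (T a b) i * φ (T a' b') i ∂ν ∂μ ∂ν ∂μ := by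
  have hφ_cont : ∀ i, ContinuousOn (fun y => φ y i) Set.univ :=
    fun i => (hφ_conv i).continuousOn isOpen_univ
  refine ⟨integral_nonneg fun a => integral_nonneg fun a' =>
    sum_nonneg fun i _ => mul_nonneg (hφ_nonneg _ i) (hφ_nonneg _ i), ?_⟩
  refine integral_integral_sum_mul_le (fun a b => hφ_nonneg (T a b)) (fun a i => ?_)
    (fun a => hφ_nonneg _) (fun a ha i => ?_) h_fin_tot
  · exact (continuousOn_univ.mp (hφ_cont i)).comp_aestronglyMeasurable (hT_int a).1
  · exact (hφ_conv i).map_integral_le (hφ_cont i) isClosed_univ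
      (ae_of_all _ fun b => Set.mem_univ _) (hT_int a) (ha i)

/-- first part of Lemma 3: for an SPD kernel
`k(y,y') = ⟨φ(y), φ(y')⟩` with convex (coordinatewise, nonnegative) feature
map `φ` and `φ(0) = 0`, and `M_u^{fo}(v) = E_U[M_u^{tot}(v, U)]` with
independent primed copies,
`0 ≤ E[k(M_u^{fo}(X^w_u), M_u^{fo}(X^{w'}_u))]
   ≤ E[k(M_u^{tot}(X^w_u,U), M_u^{tot}(X^{w'}_u,U'))]`,
provided all expectations are finite. -/
theorem stmt_7 {α β : Type*} [MeasurableSpace α] [MeasurableSpace β]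
    (μ : Measure α) (ν : Measure β) [IsProbabilityMeasure μ] [IsProbabilityMeasure ν]
    {N L : ℕ} (φ : (Fin N → ℝ) → (Fin L → ℝ))
    (hφ_conv : ∀ i, ConvexOn ℝ Set.univ fun y => φ y i)
    (hφ_nonneg : ∀ y i, 0 ≤ φ y i)
    (hφ_zero : φ 0 = 0)
    (T : α → β → (Fin N → ℝ))  -- the total sensitivity functional `M_u^{tot}`
    (hT_int : ∀ a, Integrable (T a) ν)
    (h_fin_tot : Integrable
      (fun p : (α × β) × (α × β) => ∑ i, φ (T p.1.1 p.1.2) i * φ (T p.2.1 p.2.2) i)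
      ((μ.prod ν).prod (μ.prod ν)))
    (h_fin_fo : Integrable
      (fun p : α × α => ∑ i, φ (∫ b, T p.1 b ∂ν) i * φ (∫ b, T p.2 b ∂ν) i)
      (μ.prod μ)) :
    0 ≤ (∫ a, ∫ a', ∑ i, φ (∫ b, T a b ∂ν) i * φ (∫ b, T a' b ∂ν) i ∂μ ∂μ) ∧
    (∫ a, ∫ a', ∑ i, φ (∫ b, T a b ∂ν) i * φ (∫ b, T a' b ∂ν) i ∂μ ∂μ)
      ≤ ∫ a, ∫ b, ∫ a', ∫ b', ∑ i, φ (T a b) i * φ (T a' b') i ∂ν ∂μ ∂ν ∂μ :=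
  stmt_7_general μ ν φ hφ_conv hφ_nonneg T hT_int h_fin_tot
end

section
/- With M_u^{tot}(X^w_u, U) = E_{X^{w'}_u}[M_u^*(X^w_u, X^{w'}_u, U)] where M_u^*(X^w_u, X^{w'}_u, U) := M(X^w_u, r(X^w_u, U)) − M(X^{w'}_u, r(X^{w'}_u, U)), and k an SPD kernel with convex feature map, one has E[k(M_u^{tot}(X^w_u, U), M_u^{tot}(X^{w''}_u, U'))] ≤ E[k(M_u^*(X^w_u, X^{w'}_u, U), M_u^*(X^{w''}_u, X^{w'''}_u, U'))], i.e., the total kernel-based index is bounded above by the kernel index of the double-difference functional (S_{T_u}^k ≤ Υ_u^k after normalization). -/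
open MeasureTheory

lemma aemeasurable_comp_of_gram {Z : Type*} [MeasurableSpace Z] {ρ : Measure Z} [SFinite ρ]
    {L : ℕ} (F : Z → (Fin L → ℝ))
    (hK : AEStronglyMeasurable (fun p : Z × Z => ∑ i, F p.1 i * F p.2 i) (ρ.prod ρ))
    (i : Fin L) : AEMeasurable (fun z => F z i) ρ := by
  classical
  set G : Z → EuclideanSpace ℝ (Fin L) := fun z => WithLp.toLp 2 (F z) with hG
  have hinner : ∀ z w, (inner ℝ (G z) (G w) : ℝ) = ∑ j, F z j * F w j := by
    intro z w
    simp [G, PiLp.inner_apply, RCLike.inner_apply, conj_trivial, mul_comm]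
  obtain ⟨K₀, hK₀m, hK₀e⟩ := hK
  have hslice : ∀ᵐ z ∂ρ, AEStronglyMeasurable (fun w => (inner ℝ (G z) (G w) : ℝ)) ρ := by
    filter_upwards [Measure.ae_ae_of_ae_prod hK₀e] with z hz
    refine ⟨fun w => K₀ (z, w), hK₀m.comp_measurable measurable_prodMk_left, ?_⟩
    filter_upwards [hz] with w hw
    rw [hinner]; exact hw
  set D : Set Z := {z | AEStronglyMeasurable (fun w => (inner ℝ (G z) (G w) : ℝ)) ρ} with hD
  have hDae : ∀ᵐ z ∂ρ, z ∈ D := hslice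
  set W : Submodule ℝ (EuclideanSpace ℝ (Fin L)) := Submodule.span ℝ (G '' D) with hW
  have hWmeas : ∀ v ∈ W, AEStronglyMeasurable (fun w => (inner ℝ v (G w) : ℝ)) ρ := by
    intro v hv
    induction hv using Submodule.span_induction with
    | mem x hx => obtain ⟨z, hz, rfl⟩ := hx; exact hz
    | zero => simpa using aestronglyMeasurable_const (b := (0 : ℝ))
    | add x y hx hy ihx ihy => simp only [inner_add_left]; exact ihx.add ihy
    | smul r x hx ih => simpa [inner_smul_left] using ih.const_mul r
  have hmem : ∀ᵐ z ∂ρ, G z ∈ W := by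
    filter_upwards [hDae] with z hz
    exact Submodule.subset_span ⟨z, hz, rfl⟩
  have key : ∀ c : EuclideanSpace ℝ (Fin L), AEMeasurable (fun z => (inner ℝ c (G z) : ℝ)) ρ := by
    intro c
    have hv := hWmeas _ (W.orthogonalProjection c).2
    have heq : (fun z => (inner ℝ c (G z) : ℝ)) =ᵐ[ρ]
        fun z => (inner ℝ ((W.orthogonalProjection c : EuclideanSpace ℝ (Fin L))) (G z) : ℝ) := by
      filter_upwards [hmem] with z hz
      have h0 : (inner ℝ (c - (W.orthogonalProjection c : EuclideanSpace ℝ (Fin L))) (G z) : ℝ) = 0 :=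
        Submodule.inner_left_of_mem_orthogonal hz (W.sub_starProjection_mem_orthogonal c)
      rw [inner_sub_left] at h0
      linarith
    exact aestronglyMeasurable_iff_aemeasurable.mp (hv.congr heq.symm)
  have hkey := key (EuclideanSpace.single i (1 : ℝ))
  simpa [EuclideanSpace.inner_single_left] using hkey

lemma integrable_comp_of_gram {Z : Type*} [MeasurableSpace Z] {ρ : Measure Z} [SFinite ρ]
    {L : ℕ} {F : Z → (Fin L → ℝ)} (hnn : ∀ z i, 0 ≤ F z i)
    (hK : Integrable (fun p : Z × Z => ∑ i, F p.1 i * F p.2 i) (ρ.prod ρ))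
    (i : Fin L) : Integrable (fun z => F z i) ρ := by
  have hm := aemeasurable_comp_of_gram F hK.1 i
  have hfin : ∫⁻ p, ENNReal.ofReal (∑ j, F p.1 j * F p.2 j) ∂(ρ.prod ρ) < ⊤ :=
    lt_of_le_of_lt (lintegral_mono fun p => Real.ofReal_le_enorm _) hK.2
  have hsq : (∫⁻ z, ENNReal.ofReal (F z i) ∂ρ) * (∫⁻ z, ENNReal.ofReal (F z i) ∂ρ)
      ≤ ∫⁻ p, ENNReal.ofReal (∑ j, F p.1 j * F p.2 j) ∂(ρ.prod ρ) := by
    rw [← lintegral_prod_mul hm.ennreal_ofReal hm.ennreal_ofReal]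
    refine lintegral_mono fun p => ?_
    rw [← ENNReal.ofReal_mul (hnn _ i)]
    exact ENNReal.ofReal_le_ofReal
      (Finset.single_le_sum (fun j _ => mul_nonneg (hnn _ j) (hnn _ j)) (Finset.mem_univ i))
  have hlt : ∫⁻ z, ENNReal.ofReal (F z i) ∂ρ < ⊤ := by
    by_contra h
    push_neg at h
    have htop : (∫⁻ z, ENNReal.ofReal (F z i) ∂ρ) = ⊤ := top_le_iff.mp h
    rw [htop, ENNReal.top_mul_top] at hsq
    exact absurd (hsq.trans_lt hfin) (by simp)
  refine ⟨hm.aestronglyMeasurable, ?_⟩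
  rw [hasFiniteIntegral_iff_ofReal (Filter.Eventually.of_forall fun z => hnn z i)]
  exact hlt

/-- upper bound of Lemma 3: with
`M_u^{tot}(a, b) = E_{a'}[M_u^*(a, a', b)]` where
`M_u^*(a, a', b) = f(a,b) − f(a',b)` (`f a b = M(a, r(a, b))`), and an SPD
kernel with convex nonnegative feature map `φ`, `φ(0)=0`, the total
kernel-based index numerator is bounded by the kernel index of the
double-difference functional:
`E[k(M_u^{tot}(X^w_u,U), M_u^{tot}(X^{w''}_u,U'))]
  ≤ E[k(M_u^*(X^w_u,X^{w'}_u,U), M_u^*(X^{w''}_u,X^{w'''}_u,U'))]`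
(i.e. `S_{T_u}^k ≤ Υ_u^k` after normalization). -/
theorem stmt_8 {α β : Type*} [MeasurableSpace α] [MeasurableSpace β]
    (μ : Measure α) (ν : Measure β) [IsProbabilityMeasure μ] [IsProbabilityMeasure ν]
    {N L : ℕ} (φ : (Fin N → ℝ) → (Fin L → ℝ))
    (hφ_conv : ∀ i, ConvexOn ℝ Set.univ fun y => φ y i)
    (hφ_nonneg : ∀ y i, 0 ≤ φ y i)
    (hφ_zero : φ 0 = 0)
    (f : α → β → (Fin N → ℝ))  -- `f a b` stands for `M(a, r(a, b))`
    (hf_int : ∀ b, Integrable (fun a => f a b) μ)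
    (h_fin_tot : Integrable
      (fun p : (α × β) × (α × β) =>
        ∑ i, φ (f p.1.1 p.1.2 - ∫ a', f a' p.1.2 ∂μ) i *
             φ (f p.2.1 p.2.2 - ∫ a', f a' p.2.2 ∂μ) i)
      ((μ.prod ν).prod (μ.prod ν)))
    (h_fin_star : Integrable
      (fun p : ((α × α) × β) × ((α × α) × β) =>
        ∑ i, φ (f p.1.1.1 p.1.2 - f p.1.1.2 p.1.2) i *
             φ (f p.2.1.1 p.2.2 - f p.2.1.2 p.2.2) i)
      (((μ.prod μ).prod ν).prod ((μ.prod μ).prod ν))) :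
    (∫ a, ∫ b, ∫ a'', ∫ b',
        ∑ i, φ (f a b - ∫ a', f a' b ∂μ) i * φ (f a'' b' - ∫ a', f a' b' ∂μ) i
        ∂ν ∂μ ∂ν ∂μ)
      ≤ ∫ a, ∫ a', ∫ b, ∫ a'', ∫ a''', ∫ b',
          ∑ i, φ (f a b - f a' b) i * φ (f a'' b' - f a''' b') i
          ∂ν ∂μ ∂μ ∂ν ∂μ ∂μ := by
  classical
  set P : Measure (α × β) := μ.prod ν with hPdef
  set Q : Measure ((α × α) × β) := (μ.prod μ).prod ν with hQdef
  let F : α × β → Fin L → ℝ := fun z => φ (f z.1 z.2 - ∫ a', f a' z.2 ∂μ)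
  let H : (α × α) × β → Fin L → ℝ := fun p => φ (f p.1.1 p.2 - f p.1.2 p.2)
  have hFnn : ∀ z i, 0 ≤ F z i := fun z i => hφ_nonneg _ i
  have hHnn : ∀ p i, 0 ≤ H p i := fun p i => hφ_nonneg _ i
  have hFint : ∀ i, Integrable (fun z => F z i) P :=
    fun i => integrable_comp_of_gram hFnn h_fin_tot i
  have hHint : ∀ i, Integrable (fun p => H p i) Q :=
    fun i => integrable_comp_of_gram hHnn h_fin_star i
  set I : Fin L → ℝ := fun i => ∫ z, F z i ∂P with hIdef
  set J : Fin L → ℝ := fun i => ∫ p, H p i ∂Q with hJdef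
  have hI0 : ∀ i, 0 ≤ I i := fun i => integral_nonneg fun z => hFnn z i
  -- the rearrangement equivalence
  let e : ((α × β) × α) ≃ᵐ ((α × α) × β) :=
    (MeasurableEquiv.prodAssoc.trans
      ((MeasurableEquiv.refl α).prodCongr MeasurableEquiv.prodComm)).trans
      MeasurableEquiv.prodAssoc.symm
  have he : MeasurePreserving e (P.prod μ) Q := by
    have h1 : MeasurePreserving (MeasurableEquiv.prodAssoc : ((α × β) × α) ≃ᵐ (α × β × α))
        ((μ.prod ν).prod μ) (μ.prod (ν.prod μ)) := measurePreserving_prodAssoc μ ν μ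
    have h2 : MeasurePreserving (Prod.map (id : α → α) (Prod.swap : β × α → α × β))
        (μ.prod (ν.prod μ)) (μ.prod (μ.prod ν)) :=
      (MeasurePreserving.id μ).prod Measure.measurePreserving_swap
    have h3 : MeasurePreserving
        (MeasurableEquiv.prodAssoc.symm : (α × α × β) ≃ᵐ ((α × α) × β))
        (μ.prod (μ.prod ν)) ((μ.prod μ).prod ν) :=
      (measurePreserving_prodAssoc μ μ ν).symm _
    exact h3.comp (h2.comp h1)
  have hHe_int : ∀ i, Integrable (fun x : (α × β) × α => H (e x) i) (P.prod μ) :=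
    fun i => (he.integrable_comp_emb e.measurableEmbedding).mpr (hHint i)
  have hJ_eq : ∀ i, J i = ∫ z, (∫ a', H ((z.1, a'), z.2) i ∂μ) ∂P := by
    intro i
    calc J i = ∫ x, H (e x) i ∂(P.prod μ) :=
          (he.integral_comp e.measurableEmbedding _).symm
      _ = ∫ z, (∫ a', H ((z.1, a'), z.2) i ∂μ) ∂P := integral_prod _ (hHe_int i)
  -- Jensen's inequality componentwise
  have hJensen : ∀ i, I i ≤ J i := by
    intro i
    rw [hJ_eq i]
    refine integral_mono_ae (hFint i) (hHe_int i).integral_prod_left ?_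
    filter_upwards [(hHe_int i).prod_right_ae] with z hz
    have h0 : (∫ a', (f z.1 z.2 - f a' z.2) ∂μ) = f z.1 z.2 - ∫ a', f a' z.2 ∂μ := by
      rw [integral_sub (integrable_const _) (hf_int z.2), integral_const, probReal_univ,
        one_smul]
    have hdiff_int : Integrable (fun a' => f z.1 z.2 - f a' z.2) μ :=
      (integrable_const _).sub (hf_int z.2)
    have hcomp_int : Integrable ((fun y => φ y i) ∘ fun a' => f z.1 z.2 - f a' z.2) μ := hz
    have hjen := ConvexOn.map_integral_le (f := fun a' => f z.1 z.2 - f a' z.2)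
      (hφ_conv i) ((hφ_conv i).continuousOn isOpen_univ)
      isClosed_univ (Filter.Eventually.of_forall fun _ => Set.mem_univ _)
      hdiff_int hcomp_int
    rw [h0] at hjen
    exact hjen
  have hJ0 : ∀ i, 0 ≤ J i := fun i => (hI0 i).trans (hJensen i)
  have hsum : ∑ i, I i * I i ≤ ∑ i, J i * J i :=
    Finset.sum_le_sum fun i _ => mul_le_mul (hJensen i) (hJensen i) (hI0 i) (hJ0 i)
  -- linear-combination integrals
  have hinner_tot : ∀ c : Fin L → ℝ,
      (∫ a'', ∫ b', ∑ i, c i * F (a'', b') i ∂ν ∂μ) = ∑ i, c i * I i := by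
    intro c
    have hint : Integrable (fun z : α × β => ∑ i, c i * F z i) P :=
      integrable_finset_sum _ fun i _ => (hFint i).const_mul (c i)
    calc (∫ a'', ∫ b', ∑ i, c i * F (a'', b') i ∂ν ∂μ)
        = ∫ z, (∑ i, c i * F z i) ∂P := (integral_prod _ hint).symm
      _ = ∑ i, c i * I i := by
          rw [integral_finset_sum _ fun i _ => (hFint i).const_mul (c i)]
          exact Finset.sum_congr rfl fun i _ => integral_const_mul _ _
  have hinner_star : ∀ d : Fin L → ℝ,
      (∫ a'', ∫ a''', ∫ b', ∑ i, d i * H ((a'', a'''), b') i ∂ν ∂μ ∂μ) = ∑ i, d i * J i := by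
    intro d
    have hint : Integrable (fun p : (α × α) × β => ∑ i, d i * H p i) Q :=
      integrable_finset_sum _ fun i _ => (hHint i).const_mul (d i)
    calc (∫ a'', ∫ a''', ∫ b', ∑ i, d i * H ((a'', a'''), b') i ∂ν ∂μ ∂μ)
        = ∫ k, (∫ b', ∑ i, d i * H (k, b') i ∂ν) ∂(μ.prod μ) :=
          (integral_prod _ hint.integral_prod_left).symm
      _ = ∫ p, (∑ i, d i * H p i) ∂Q := (integral_prod _ hint).symm
      _ = ∑ i, d i * J i := by
          rw [integral_finset_sum _ fun i _ => (hHint i).const_mul (d i)]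
          exact Finset.sum_congr rfl fun i _ => integral_const_mul _ _
  -- rewrite the inner integrals of both sides
  have hL1 : ∀ (a : α) (b : β),
      (∫ a'', ∫ b', ∑ i, φ (f a b - ∫ a', f a' b ∂μ) i * φ (f a'' b' - ∫ a', f a' b' ∂μ) i
        ∂ν ∂μ) = ∑ i, φ (f a b - ∫ a', f a' b ∂μ) i * I i :=
    fun a b => hinner_tot (fun i => φ (f a b - ∫ a', f a' b ∂μ) i)
  have hR1 : ∀ (a a' : α) (b : β),
      (∫ a'', ∫ a''', ∫ b', ∑ i, φ (f a b - f a' b) i * φ (f a'' b' - f a''' b') i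
        ∂ν ∂μ ∂μ) = ∑ i, φ (f a b - f a' b) i * J i :=
    fun a a' b => hinner_star (fun i => φ (f a b - f a' b) i)
  have hFI_int : Integrable (fun z : α × β => ∑ i, F z i * I i) P :=
    integrable_finset_sum _ fun i _ => (hFint i).mul_const (I i)
  have hHJ_int : Integrable (fun p : (α × α) × β => ∑ i, H p i * J i) Q :=
    integrable_finset_sum _ fun i _ => (hHint i).mul_const (J i)
  calc (∫ a, ∫ b, ∫ a'', ∫ b',
        ∑ i, φ (f a b - ∫ a', f a' b ∂μ) i * φ (f a'' b' - ∫ a', f a' b' ∂μ) i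
        ∂ν ∂μ ∂ν ∂μ)
      = ∫ a, ∫ b, ∑ i, φ (f a b - ∫ a', f a' b ∂μ) i * I i ∂ν ∂μ := by
        simp only [hL1]
    _ = ∫ z, (∑ i, F z i * I i) ∂P := (integral_prod _ hFI_int).symm
    _ = ∑ i, I i * I i := by
        rw [integral_finset_sum _ fun i _ => (hFint i).mul_const (I i)]
        exact Finset.sum_congr rfl fun i _ => integral_mul_const _ _
    _ ≤ ∑ i, J i * J i := hsum
    _ = ∫ p, (∑ i, H p i * J i) ∂Q := by
        rw [integral_finset_sum _ fun i _ => (hHint i).mul_const (J i)]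
        exact (Finset.sum_congr rfl fun i _ => (integral_mul_const _ _).symm)
    _ = ∫ k, (∫ b, ∑ i, H (k, b) i * J i ∂ν) ∂(μ.prod μ) := integral_prod _ hHJ_int
    _ = ∫ a, ∫ a', ∫ b, ∑ i, φ (f a b - f a' b) i * J i ∂ν ∂μ ∂μ :=
        integral_prod _ hHJ_int.integral_prod_left
    _ = ∫ a, ∫ a', ∫ b, ∫ a'', ∫ a''', ∫ b',
          ∑ i, φ (f a b - f a' b) i * φ (f a'' b' - f a''' b') i
          ∂ν ∂μ ∂μ ∂ν ∂μ ∂μ := by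
        simp only [hR1]
end

section
/- For a single-output model (N = 1) with independent inputs and the kernel k_2(y, y') = |y|² |y'|², the kernel-based total index satisfies S_{T_u}^{k_2} = (S_{T_u})², where S_{T_u} = E[Var(M(X)|X_{∼u})] / Var(M(X)) is the total Sobol' index; equivalently E[k_2(M_u^{tot}(X_u,U), M_u^{tot}(X'_u,U'))] = E[(M_u^{tot})²]² since the two arguments are independent. -/
open MeasureTheory

/-- for a single-output model with independent inputs
(`X_u ∼ μ`, `X_{∼u} ∼ ν`, `M(X) = f(X_u, X_{∼u})`) and the kernel
`k_2(y,y') = |y|²|y'|²`, the key fact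
`E[k_2(M_u^{tot}, M_u^{tot'})] = (E[(M_u^{tot})²])²` holds (independent
arguments), and consequently `S_{T_u}^{k_2} = (S_{T_u})²` where
`S_{T_u} = E[Var(M|X_{∼u})]/Var(M)` is the total Sobol' index. -/
theorem stmt_9 {α β : Type*} [MeasurableSpace α] [MeasurableSpace β]
    (μ : Measure α) (ν : Measure β) [IsProbabilityMeasure μ] [IsProbabilityMeasure ν]
    (f : α → β → ℝ)
    (hf_int : Integrable (fun p : α × β => f p.1 p.2) (μ.prod ν))
    (hT_sq : Integrable (fun p : α × β => (f p.1 p.2 - ∫ a, f a p.2 ∂μ) ^ 2) (μ.prod ν))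
    (hC_sq : Integrable
      (fun p : α × β => (f p.1 p.2 - ∫ b, ∫ a, f a b ∂μ ∂ν) ^ 2) (μ.prod ν))
    (hVar_pos : 0 < ∫ b, ∫ a, (f a b - ∫ b', ∫ a', f a' b' ∂μ ∂ν) ^ 2 ∂μ ∂ν) :
    -- `E[k_2(M_u^{tot}, M_u^{tot'})] = (E[(M_u^{tot})²])²`
    (∫ b, ∫ a, ∫ b', ∫ a',
        (f a b - ∫ a'', f a'' b ∂μ) ^ 2 * (f a' b' - ∫ a'', f a'' b' ∂μ) ^ 2
        ∂μ ∂ν ∂μ ∂ν)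
      = (∫ b, ∫ a, (f a b - ∫ a'', f a'' b ∂μ) ^ 2 ∂μ ∂ν) ^ 2 ∧
    -- `S_{T_u}^{k_2} = (S_{T_u})²` with `S_{T_u} = E[Var(M|X_{∼u})]/Var(M)`
    (∫ b, ∫ a, ∫ b', ∫ a',
        (f a b - ∫ a'', f a'' b ∂μ) ^ 2 * (f a' b' - ∫ a'', f a'' b' ∂μ) ^ 2
        ∂μ ∂ν ∂μ ∂ν)
      / (∫ b, ∫ a, ∫ b', ∫ a',
          (f a b - ∫ b'', ∫ a'', f a'' b'' ∂μ ∂ν) ^ 2 *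
            (f a' b' - ∫ b'', ∫ a'', f a'' b'' ∂μ ∂ν) ^ 2
          ∂μ ∂ν ∂μ ∂ν)
      = ((∫ b, ∫ a, (f a b - ∫ a'', f a'' b ∂μ) ^ 2 ∂μ ∂ν)
          / (∫ b, ∫ a, (f a b - ∫ b'', ∫ a'', f a'' b'' ∂μ ∂ν) ^ 2 ∂μ ∂ν)) ^ 2 := by
  have key : ∀ g : α → β → ℝ,
      (∫ b, ∫ a, ∫ b', ∫ a', g a b * g a' b' ∂μ ∂ν ∂μ ∂ν)
        = (∫ b, ∫ a, g a b ∂μ ∂ν) ^ 2 := by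
    intro g
    simp only [integral_const_mul, integral_mul_const]
    ring
  have h1 := key (fun a b => (f a b - ∫ a'', f a'' b ∂μ) ^ 2)
  have h2 := key (fun a b => (f a b - ∫ b'', ∫ a'', f a'' b'' ∂μ ∂ν) ^ 2)
  refine ⟨h1, ?_⟩
  rw [h1, h2, div_pow]
end
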